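/- For every morphism f : a → b of R, the category of p-factorizations of f — whose objects are triples (Z, u, v) with Z an object of D_R, u : a → p(Z) and v : p(Z) → b morphisms of R satisfying v ∘ u = f, and whose morphisms (Z, u, v) → (Z', u', v') are morphisms t : Z → Z' of D_R with p(t) ∘ u = u' and v' ∘ p(t) = v — is nonempty and connected (any two objects are joined by a finite zig-zag of morphisms). -/

import Mathlib

open CategoryTheory

universe u

namespace Unrolling

/-- A morphism is "an identity" if it is the `eqToHom` of an equality of objects. -/
def IsIdArrow {C : Type*} [Category C] {x y : C} (m : x ⟶ y) : Prop :=
  ∃ h : x = y, m = eqToHom h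

/-- A morphism lies in the image of the functor `F` (up to the evident equalities of objects). -/
def InImg {A C : Type*} [Category A] [Category C] (F : A ⥤ C) {x y : C} (m : x ⟶ y) : Prop :=
  ∃ (a b : A) (k : a ⟶ b) (ha : F.obj a = x) (hb : F.obj b = y),
    m = eqToHom ha.symm ≫ F.map k ≫ eqToHom hb

variable {R₀ R Fs : Type u} [SmallCategory R₀] [SmallCategory R] [SmallCategory Fs]

/-- The free category comonad applied to a functor `c : R₀ ⥤ R`, i.e. the induced functor
between path categories. -/
def freeMap (c : R₀ ⥤ R) : Paths R₀ ⥤ Paths R where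
  obj x := c.obj x
  map f := c.toPrefunctor.mapPath f
  map_id _ := rfl
  map_comp f g := c.toPrefunctor.mapPath_comp f g

/-- A "free isomorphism": the image under `i : Paths R ⥤ F_≃(R)` of a length-one path whose
arrow is an isomorphism of `R`. -/
def FreeIso (i : Paths R ⥤ Fs) {x y : Fs} (m : x ⟶ y) : Prop :=
  ∃ (a b : R) (f : a ⟶ b) (ha : i.obj ((Paths.of R).obj a) = x) (hb : i.obj ((Paths.of R).obj b) = y),
    IsIso f ∧ m = eqToHom ha.symm ≫ i.map ((Paths.of R).map f) ≫ eqToHom hb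

/-- The twisted arrow category of `C`: objects are morphisms of `C`. -/
structure Tw (C : Type*) [Category C] where
  left : C
  right : C
  hom : left ⟶ right

/-- Morphisms `f → f'` in the twisted arrow category: pairs `(u, v)` with `f' = u ≫ f ≫ v`. -/
@[ext]
structure TwHom {C : Type*} [Category C] (X Y : Tw C) where
  u : Y.left ⟶ X.left
  v : X.right ⟶ Y.right
  w : Y.hom = u ≫ X.hom ≫ v

instance {C : Type*} [Category C] : Category (Tw C) where
  Hom := TwHom
  id X := ⟨𝟙 _, 𝟙 _, by simp⟩
  comp {X Y Z} f g := ⟨g.u ≫ f.u, f.v ≫ g.v, by rw [g.w, f.w]; simp⟩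
  id_comp f := by apply TwHom.ext <;> simp [CategoryStruct.id, CategoryStruct.comp]
  comp_id f := by apply TwHom.ext <;> simp [CategoryStruct.id, CategoryStruct.comp]
  assoc f g h := by apply TwHom.ext <;> simp [CategoryStruct.comp]

/-- The defining property of the objects of `D_R` inside the twisted arrow category of
`F_≃(R)`: those morphisms factoring as (identity or image of `R₀`) followed by
(identity or free isomorphism). -/
def InD (i₀ : R₀ ⥤ Fs) (i : Paths R ⥤ Fs) (X : Tw Fs) : Prop :=
  ∃ (z : Fs) (g : X.left ⟶ z) (h : z ⟶ X.right),
    X.hom = g ≫ h ∧ (IsIdArrow g ∨ InImg i₀ g) ∧ (IsIdArrow h ∨ FreeIso i h)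

/-- The category `D_R`, a full subcategory of the twisted arrow category of `F_≃(R)`. -/
abbrev DR (i₀ : R₀ ⥤ Fs) (i : Paths R ⥤ Fs) := ObjectProperty.FullSubcategory (InD i₀ i)

/-- The projection `p : D_R ⥤ R`, sending an object `f : x ⟶ y` to `p₀(y)` and a morphism
`(u, v)` to `p₀(v)`. -/
def pFun (i₀ : R₀ ⥤ Fs) (i : Paths R ⥤ Fs) (p₀ : Fs ⥤ R) : DR i₀ i ⥤ R where
  obj X := p₀.obj X.obj.right
  map {X Y} t := p₀.map (TwHom.v t.hom)
  map_id X := p₀.map_id _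
  map_comp f g := p₀.map_comp _ _

/-- An object of the category of `p`-factorizations of `f : a ⟶ b`: an object `Z` of the
domain of `p` together with a factorization `a ⟶ p(Z) ⟶ b` of `f`. -/
structure PFact {D : Type*} [Category D] {E : Type*} [Category E]
    (p : D ⥤ E) {a b : E} (f : a ⟶ b) where
  Z : D
  u : a ⟶ p.obj Z
  v : p.obj Z ⟶ b
  w : u ≫ v = f

/-- There is a morphism of factorizations `X ⟶ Y`: a morphism `t : X.Z ⟶ Y.Z` compatible with
the structure maps. -/
def PFactRel {D : Type*} [Category D] {E : Type*} [Category E]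
    {p : D ⥤ E} {a b : E} {f : a ⟶ b} (X Y : PFact p f) : Prop :=
  ∃ t : X.Z ⟶ Y.Z, X.u ≫ p.map t = Y.u ∧ p.map t ≫ Y.v = X.v

/-!
Every factorization `(Z, u, v)` receives a morphism `(Z.hom, 𝟙)` from the factorization with the
same `u, v` through the identity of the codomain of `Z`, so it suffices to connect factorizations
through identity objects `𝟙_z`. A morphism `g : z ⟶ z'` of `F_≃(R)` that is itself an object of
`D_R` receives `(𝟙, g)` from `𝟙_z` and `(g, 𝟙)` from `𝟙_z'`; this zig-zag moves `p₀(g)` from the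
second map of a factorization to the first. The pushout `F_≃(R)` is jointly surjective on objects
and the objects of `R₀` already come from `R`, so every object of `F_≃(R)` comes from `R`. For
`𝟙_W` with second map `v : W ⟶ b`, the lift `ω ≫ c(k) = v ≫ ω'` of `v` gives two such steps, the
free isomorphism `[ω]` and `c(k) ≫ [ω'⁻¹]`, ending at the factorization `f = f ≫ 𝟙` through `𝟙_b`.
-/

theorem obj_surjective_of_isPushout {X A B C : Type u} [SmallCategory X]
    [SmallCategory A] [SmallCategory B] [SmallCategory C]
    {G : X ⥤ A} {H : X ⥤ B} {j₀ : A ⥤ C} {j : B ⥤ C} (hG : Function.Surjective G.obj)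
    (hcomm : G ⋙ j₀ = H ⋙ j)
    (huniv : ∀ (T : Cat.{u, u}) (q₀ : A ⥤ T) (q : B ⥤ T),
      G ⋙ q₀ = H ⋙ q → ∃! d : C ⥤ T, j₀ ⋙ d = q₀ ∧ j ⋙ d = q) :
    Function.Surjective j.obj := by
  -- The image of `j` receives a cocone; uniqueness makes the induced functor split the inclusion.
  let P : ObjectProperty C := fun z => ∃ w, j.obj w = z
  have hj₀ : ∀ a, P (j₀.obj a) := fun a => by
    obtain ⟨x, rfl⟩ := hG a
    exact ⟨H.obj x, (Functor.congr_obj hcomm x).symm⟩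
  let q₀ := P.lift j₀ hj₀
  let q := P.lift j fun w => ⟨w, rfl⟩
  have hq : G ⋙ q₀ = H ⋙ q :=
    CategoryTheory.Functor.ext
      (fun x => ObjectProperty.FullSubcategory.ext (Functor.congr_obj hcomm x))
      fun _ _ g => P.ι.map_injective (by simpa [q₀, q] using Functor.congr_hom hcomm g)
  obtain ⟨d, ⟨hd₀, hd⟩, -⟩ := huniv (Cat.of P.FullSubcategory) q₀ q hq
  obtain ⟨e, -, he⟩ := huniv (Cat.of C) j₀ j hcomm
  have hdι : d ⋙ P.ι = 𝟭 C :=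
    (he (d ⋙ P.ι) ⟨congrArg (· ⋙ P.ι) hd₀, congrArg (· ⋙ P.ι) hd⟩).trans
      (he _ ⟨j₀.comp_id, j.comp_id⟩).symm
  intro z
  obtain ⟨w, hw⟩ := (d.obj z).property
  exact ⟨w, hw.trans (Functor.congr_obj hdι z)⟩

section Factorizations

variable {D E : Type*} [Category D] [Category E] {p : D ⥤ E} {a b : E} {f : a ⟶ b}

def PFactAdj (X Y : PFact p f) : Prop :=
  PFactRel X Y ∨ PFactRel Y X

instance : Std.Symm (PFactAdj (p := p) (f := f)) :=
  ⟨fun _ _ => Or.symm⟩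

theorem PFactRel.zigzag {X Y : PFact p f} (h : PFactRel X Y) :
    Relation.ReflTransGen PFactAdj X Y :=
  .single (.inl h)

end Factorizations

section DR

variable (i₀ : R₀ ⥤ Fs) (i : Paths R ⥤ Fs)

theorem inD_id (z : Fs) : InD i₀ i ⟨z, z, 𝟙 z⟩ :=
  ⟨z, 𝟙 z, 𝟙 z, (Category.comp_id _).symm, .inl ⟨rfl, rfl⟩, .inl ⟨rfl, rfl⟩⟩

variable {i₀ i}

theorem inD_of_freeIso {x y : Fs} {h : x ⟶ y} (hh : FreeIso i h) : InD i₀ i ⟨x, y, h⟩ :=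
  ⟨x, 𝟙 x, h, (Category.id_comp _).symm, .inl ⟨rfl, rfl⟩, .inr hh⟩

theorem inD_comp {x z y : Fs} {g : x ⟶ z} {h : z ⟶ y} (hg : InImg i₀ g) (hh : FreeIso i h) :
    InD i₀ i ⟨x, y, g ≫ h⟩ :=
  ⟨z, g, h, rfl, .inr hg, .inr hh⟩

theorem freeIso_map_of {x y : R} (g : x ⟶ y) [IsIso g] :
    FreeIso i (i.map ((Paths.of R).map g)) :=
  ⟨x, y, g, rfl, rfl, inferInstance, by simp⟩

theorem inImg_map_freeMap {c : R₀ ⥤ R} (hcomm : pathComposition R₀ ⋙ i₀ = freeMap c ⋙ i)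
    {x y : R₀} (P : (Paths.of R₀).obj x ⟶ (Paths.of R₀).obj y) :
    InImg i₀ (i.map ((freeMap c).map P)) :=
  ⟨x, y, composePath P, Functor.congr_obj hcomm x, Functor.congr_obj hcomm y,
    Functor.congr_hom hcomm.symm P⟩

variable (i₀ i)

def DR.idObj (z : Fs) : DR i₀ i :=
  ⟨⟨z, z, 𝟙 z⟩, inD_id i₀ i z⟩

variable (p₀ : Fs ⥤ R) {a b : R} {f : a ⟶ b}

def idFact (z : Fs) (u : a ⟶ p₀.obj z) (v : p₀.obj z ⟶ b) (h : u ≫ v = f) :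
    PFact (pFun i₀ i p₀) f :=
  ⟨DR.idObj i₀ i z, u, v, h⟩

theorem idFact_rel (X : PFact (pFun i₀ i p₀) f) :
    PFactRel (idFact i₀ i p₀ X.Z.obj.right X.u X.v X.w) X :=
  ⟨ObjectProperty.homMk (show TwHom (DR.idObj i₀ i _).obj X.Z.obj from
    ⟨X.Z.obj.hom, 𝟙 _, by simp [DR.idObj]⟩),
    by erw [p₀.map_id]; exact Category.comp_id _, by erw [p₀.map_id]; exact Category.id_comp _⟩

theorem idFact_zigzag_of_inD {z z' : Fs} (g : z ⟶ z') (hg : InD i₀ i ⟨z, z', g⟩)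
    {u : a ⟶ p₀.obj z} {v : p₀.obj z ⟶ b} {u' : a ⟶ p₀.obj z'} {v' : p₀.obj z' ⟶ b}
    (h : u ≫ v = f) (h' : u' ≫ v' = f) (hu : u ≫ p₀.map g = u') (hv : p₀.map g ≫ v' = v) :
    Relation.ReflTransGen PFactAdj (idFact i₀ i p₀ z u v h) (idFact i₀ i p₀ z' u' v' h') := by
  subst hu hv
  let G : PFact (pFun i₀ i p₀) f := ⟨⟨⟨z, z', g⟩, hg⟩, u ≫ p₀.map g, v', h'⟩
  have to_G : PFactRel (idFact i₀ i p₀ z u _ h) G :=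
    ⟨ObjectProperty.homMk (show TwHom (DR.idObj i₀ i z).obj G.Z.obj from
      ⟨𝟙 z, g, by simp [DR.idObj, G]⟩), rfl, rfl⟩
  exact to_G.zigzag.trans (Std.Symm.symm _ _ (idFact_rel i₀ i p₀ G).zigzag)

end DR

section Projection

variable {i₀ : R₀ ⥤ Fs} {i : Paths R ⥤ Fs} {p₀ : Fs ⥤ R}

theorem obj_map_of_comp_eq (hp₂ : i ⋙ p₀ = pathComposition R) (W : R) :
    p₀.obj (i.obj ((Paths.of R).obj W)) = W :=
  Functor.congr_obj hp₂ W

theorem map_map_of_comp_eq (hp₂ : i ⋙ p₀ = pathComposition R) {W W' : R} (g : W ⟶ W') :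
    p₀.map (i.map ((Paths.of R).map g)) =
      eqToHom (obj_map_of_comp_eq hp₂ W) ≫ g ≫ eqToHom (obj_map_of_comp_eq hp₂ W').symm :=
  (Functor.congr_hom hp₂ _).trans (by erw [pathComposition_map, composePath_toPath]; rfl)

def codomainFact (hp₂ : i ⋙ p₀ = pathComposition R) {a b : R} (f : a ⟶ b) :
    PFact (pFun i₀ i p₀) f :=
  idFact i₀ i p₀ (i.obj ((Paths.of R).obj b))
    (f ≫ eqToHom (obj_map_of_comp_eq hp₂ b).symm) (eqToHom (obj_map_of_comp_eq hp₂ b))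
    (by simp)

theorem idFact_zigzag_codomainFact (c : R₀ ⥤ R)
    (hlift : ∀ {a b : R} (f : a ⟶ b), ∃ (x y : R₀) (k : x ⟶ y)
      (w : a ≅ c.obj x) (w' : b ≅ c.obj y), w.hom ≫ c.map k = f ≫ w'.hom)
    (hcomm : pathComposition R₀ ⋙ i₀ = freeMap c ⋙ i)
    (hp₂ : i ⋙ p₀ = pathComposition R) {a b : R} {f : a ⟶ b} {W : R} {z : Fs}
    (hz : i.obj ((Paths.of R).obj W) = z) (u : a ⟶ p₀.obj z) (v : p₀.obj z ⟶ b) (h : u ≫ v = f) :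
    Relation.ReflTransGen PFactAdj (idFact i₀ i p₀ z u v h) (codomainFact hp₂ f) := by
  subst hz
  obtain ⟨x, y, k, ω, ω', hk⟩ := hlift (eqToHom (obj_map_of_comp_eq hp₂ W).symm ≫ v)
  let g₁ := i.map ((Paths.of R).map ω.hom)
  let g₂ := i.map ((Paths.of R).map (c.map k)) ≫ i.map ((Paths.of R).map ω'.inv)
  have hg₁ : InD i₀ i ⟨_, _, g₁⟩ := inD_of_freeIso (freeIso_map_of ω.hom)
  have hg₂ : InD i₀ i ⟨_, _, g₂⟩ :=
    inD_comp (inImg_map_freeMap hcomm ((Paths.of R₀).map k)) (freeIso_map_of ω'.inv)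
  have key : p₀.map g₁ ≫ p₀.map g₂ ≫ eqToHom (obj_map_of_comp_eq hp₂ b) = v := by
    simp only [g₁, g₂, Functor.map_comp, map_map_of_comp_eq hp₂, Category.assoc,
      eqToHom_trans_assoc, eqToHom_refl, Category.id_comp, reassoc_of% hk]
    simp
  have h' : (u ≫ p₀.map g₁) ≫ p₀.map g₂ ≫ eqToHom (obj_map_of_comp_eq hp₂ b) = f := by
    rw [Category.assoc, key, h]
  exact (idFact_zigzag_of_inD i₀ i p₀ g₁ hg₁ h h' rfl key).trans
    (idFact_zigzag_of_inD i₀ i p₀ g₂ hg₂ h' _ (by rw [← h']; simp) rfl)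

end Projection

theorem factorizations_nonempty_connected_general
    (c : R₀ ⥤ R)
    (hlift : ∀ {a b : R} (f : a ⟶ b), ∃ (x y : R₀) (k : x ⟶ y)
      (w : a ≅ c.obj x) (w' : b ≅ c.obj y), w.hom ≫ c.map k = f ≫ w'.hom)
    (i₀ : R₀ ⥤ Fs) (i : Paths R ⥤ Fs)
    (hcomm : pathComposition R₀ ⋙ i₀ = freeMap c ⋙ i)
    (huniv : ∀ (T : Cat.{u, u}) (q₀ : R₀ ⥤ T) (q : Paths R ⥤ T),
      pathComposition R₀ ⋙ q₀ = freeMap c ⋙ q →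
      ∃! d : Fs ⥤ T, i₀ ⋙ d = q₀ ∧ i ⋙ d = q)
    (p₀ : Fs ⥤ R) (hp₂ : i ⋙ p₀ = pathComposition R)
    {a b : R} (f : a ⟶ b) :
    Nonempty (PFact (pFun i₀ i p₀) f) ∧
    ∀ X Y : PFact (pFun i₀ i p₀) f,
      Relation.ReflTransGen (fun A B => PFactRel A B ∨ PFactRel B A) X Y := by
  have hsurj : Function.Surjective i.obj :=
    obj_surjective_of_isPushout (G := pathComposition R₀) (fun x => ⟨x, rfl⟩) hcomm huniv
  have to_codomain (X : PFact (pFun i₀ i p₀) f) :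
      Relation.ReflTransGen PFactAdj X (codomainFact hp₂ f) := by
    obtain ⟨W, hW⟩ := hsurj X.Z.obj.right
    exact .head (.inr (idFact_rel i₀ i p₀ X))
      (idFact_zigzag_codomainFact c hlift hcomm hp₂ (W := W) hW X.u X.v X.w)
  exact ⟨⟨codomainFact hp₂ f⟩,
    fun X Y => (to_codomain X).trans (Std.Symm.symm _ _ (to_codomain Y))⟩

/-- In the situation of the unrolling construction, for every morphism
`f : a ⟶ b` of `R`, the category of `p`-factorizations of `f` is nonempty and connected:
any two factorizations are joined by a finite zig-zag of morphisms of factorizations. -/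
theorem factorizations_nonempty_connected
    (c : R₀ ⥤ R)
    (hlift : ∀ {a b : R} (f : a ⟶ b), ∃ (x y : R₀) (k : x ⟶ y)
      (w : a ≅ c.obj x) (w' : b ≅ c.obj y), w.hom ≫ c.map k = f ≫ w'.hom)
    (i₀ : R₀ ⥤ Fs) (i : Paths R ⥤ Fs)
    (hcomm : pathComposition R₀ ⋙ i₀ = freeMap c ⋙ i)
    (huniv : ∀ (T : Cat.{u, u}) (q₀ : R₀ ⥤ T) (q : Paths R ⥤ T),
      pathComposition R₀ ⋙ q₀ = freeMap c ⋙ q →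
      ∃! d : Fs ⥤ T, i₀ ⋙ d = q₀ ∧ i ⋙ d = q)
    (p₀ : Fs ⥤ R) (hp₁ : i₀ ⋙ p₀ = c) (hp₂ : i ⋙ p₀ = pathComposition R)
    {a b : R} (f : a ⟶ b) :
    Nonempty (PFact (pFun i₀ i p₀) f) ∧
    ∀ X Y : PFact (pFun i₀ i p₀) f,
      Relation.ReflTransGen (fun A B => PFactRel A B ∨ PFactRel B A) X Y :=
  factorizations_nonempty_connected_general c hlift i₀ i hcomm huniv p₀ hp₂ f

end Unrolling
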